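/- For a smooth scalar Q : (0,∞) → ℝ, the Laplacian in ξ of the isotropic tensor Q_{ij}(ξ) = r Q'(ξ_i ξ_j/r² − δ_{ij}) − 2Q δ_{ij} is again of the same isotropic form with defining scalar D(Q) = Q'' + (4/r)Q': that is, Δ_ξ Q_{ij} = r (DQ)'(ξ_i ξ_j/r² − δ_{ij}) − 2 (DQ) δ_{ij}. -/

import Mathlib

open Real

/-- Partial derivative in the `k`-th coordinate direction. -/
noncomputable def pd (f : EuclideanSpace ℝ (Fin 3) → ℝ) (k : Fin 3)
    (x : EuclideanSpace ℝ (Fin 3)) : ℝ :=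
  fderiv ℝ f x (EuclideanSpace.single k 1)

/-- Componentwise Euclidean Laplacian. -/
noncomputable def lap (f : EuclideanSpace ℝ (Fin 3) → ℝ)
    (x : EuclideanSpace ℝ (Fin 3)) : ℝ :=
  ∑ k, pd (pd f k) k x

/-- The isotropic tensor with defining scalar `Q`. -/
noncomputable def Qtens (Q : ℝ → ℝ) (ξ : EuclideanSpace ℝ (Fin 3)) (i j : Fin 3) : ℝ :=
  ‖ξ‖ * deriv Q ‖ξ‖ * (ξ i * ξ j / ‖ξ‖ ^ 2 - if i = j then 1 else 0)
    - 2 * Q ‖ξ‖ * (if i = j then 1 else 0)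

local notation "E" => EuclideanSpace ℝ (Fin 3)

lemma norm_hasFDerivAt {ξ : E} (h : ξ ≠ 0) :
    HasFDerivAt (fun η : E => ‖η‖) (‖ξ‖⁻¹ • innerSL ℝ ξ) ξ := by
  have h1 : HasFDerivAt (fun η : E => ‖η‖ ^ 2) (2 • innerSL ℝ ξ) ξ :=
    (hasStrictFDerivAt_norm_sq ξ).hasFDerivAt
  have hn : (0:ℝ) < ‖ξ‖ := norm_pos_iff.2 h
  have h2 : HasDerivAt Real.sqrt (1 / (2 * Real.sqrt (‖ξ‖ ^ 2))) (‖ξ‖ ^ 2) :=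
    Real.hasDerivAt_sqrt (by positivity)
  have h3 := h2.comp_hasFDerivAt ξ h1
  have key : (fun η : E => Real.sqrt (‖η‖ ^ 2)) = fun η : E => ‖η‖ := by
    funext η; rw [Real.sqrt_sq (norm_nonneg η)]
  rw [show (Real.sqrt ∘ fun η : E => ‖η‖ ^ 2) = fun η : E => ‖η‖ from key] at h3
  refine h3.congr_fderiv ?_
  rw [Real.sqrt_sq (norm_nonneg ξ)]
  ext v
  simp only [ContinuousLinearMap.smul_apply, smul_eq_mul, two_smul,
    ContinuousLinearMap.add_apply]
  field_simp
  ring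

lemma radial_hasFDerivAt {g : ℝ → ℝ} {g' : ℝ} {ξ : E} (h : ξ ≠ 0)
    (hg : HasDerivAt g g' ‖ξ‖) :
    HasFDerivAt (fun η : E => g ‖η‖) ((g' * ‖ξ‖⁻¹) • innerSL ℝ ξ) ξ := by
  have h3 := hg.comp_hasFDerivAt ξ (norm_hasFDerivAt h)
  refine h3.congr_fderiv ?_
  rw [smul_smul]

lemma term_hasFDerivAt {g : ℝ → ℝ} {g' : ℝ} {P : E → ℝ} {P' : E →L[ℝ] ℝ} {ξ : E}
    (h : ξ ≠ 0) (hg : HasDerivAt g g' ‖ξ‖) (hP : HasFDerivAt P P' ξ) :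
    HasFDerivAt (fun η : E => g ‖η‖ * P η)
      (g ‖ξ‖ • P' + P ξ • ((g' * ‖ξ‖⁻¹) • innerSL ℝ ξ)) ξ :=
  (radial_hasFDerivAt h hg).mul hP

lemma proj_hasFDerivAt (m : Fin 3) (ξ : E) :
    HasFDerivAt (fun η : E => η m) (EuclideanSpace.proj (𝕜 := ℝ) m) ξ :=
  (EuclideanSpace.proj (𝕜 := ℝ) m).hasFDerivAt

@[simp] lemma innerSL_single (ξ : E) (k : Fin 3) :
    innerSL ℝ ξ (EuclideanSpace.single k 1) = ξ k := by
  simp [EuclideanSpace.inner_single_right]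

@[simp] lemma proj_single (m k : Fin 3) :
    EuclideanSpace.proj (𝕜 := ℝ) m (EuclideanSpace.single k (1:ℝ))
      = if k = m then 1 else 0 := by
  simp [EuclideanSpace.proj, eq_comm]

lemma aux_deriv_contDiffOn {g : ℝ → ℝ} (hg : ContDiffOn ℝ (⊤ : ℕ∞) g (Set.Ioi 0)) :
    ContDiffOn ℝ (⊤ : ℕ∞) (deriv g) (Set.Ioi 0) :=
  hg.deriv_of_isOpen isOpen_Ioi (by simp)

lemma aux_hasDerivAt {g : ℝ → ℝ} (hg : ContDiffOn ℝ (⊤ : ℕ∞) g (Set.Ioi 0)) {r : ℝ}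
    (hr : 0 < r) : HasDerivAt g (deriv g r) r :=
  ((hg.contDiffAt (Ioi_mem_nhds hr)).differentiableAt (by simp)).hasDerivAt

noncomputable def fA (Q : ℝ → ℝ) (s : ℝ) : ℝ := deriv Q s / s
noncomputable def fA' (Q : ℝ → ℝ) (s : ℝ) : ℝ := deriv (deriv Q) s / s - deriv Q s / s ^ 2
noncomputable def fB (Q : ℝ → ℝ) (s : ℝ) : ℝ := -(s * deriv Q s) - 2 * Q s
noncomputable def fB' (Q : ℝ → ℝ) (s : ℝ) : ℝ :=
  -(deriv Q s + s * deriv (deriv Q) s) - 2 * deriv Q s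
noncomputable def fC (Q : ℝ → ℝ) (s : ℝ) : ℝ :=
  deriv (deriv Q) s / s ^ 2 - deriv Q s / s ^ 3
noncomputable def fC' (Q : ℝ → ℝ) (s : ℝ) : ℝ :=
  deriv (deriv (deriv Q)) s / s ^ 2 - 3 * deriv (deriv Q) s / s ^ 3 + 3 * deriv Q s / s ^ 4
noncomputable def fD (Q : ℝ → ℝ) (s : ℝ) : ℝ := -3 * deriv Q s / s - deriv (deriv Q) s
noncomputable def fD' (Q : ℝ → ℝ) (s : ℝ) : ℝ :=
  -3 * deriv (deriv Q) s / s + 3 * deriv Q s / s ^ 2 - deriv (deriv (deriv Q)) s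

section derivs
variable {Q : ℝ → ℝ} (hQ : ContDiffOn ℝ (⊤ : ℕ∞) Q (Set.Ioi 0)) {s : ℝ} (hs : 0 < s)
include hQ hs

lemma hQ0at : HasDerivAt Q (deriv Q s) s := aux_hasDerivAt hQ hs
lemma hQ1at : HasDerivAt (deriv Q) (deriv (deriv Q) s) s :=
  aux_hasDerivAt (aux_deriv_contDiffOn hQ) hs
lemma hQ2at : HasDerivAt (deriv (deriv Q)) (deriv (deriv (deriv Q)) s) s :=
  aux_hasDerivAt (aux_deriv_contDiffOn (aux_deriv_contDiffOn hQ)) hs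

lemma hAat : HasDerivAt (fA Q) (fA' Q s) s := by
  have h := (hQ1at hQ hs).div (hasDerivAt_id s) hs.ne'
  have heq : fA' Q s = (deriv (deriv Q) s * id s - deriv Q s * 1) / id s ^ 2 := by
    unfold fA'; simp only [id]; field_simp
  rw [heq]; unfold fA; exact h

lemma hBat : HasDerivAt (fB Q) (fB' Q s) s := by
  have h := (((hasDerivAt_id s).mul (hQ1at hQ hs)).neg).sub ((hQ0at hQ hs).const_mul 2)
  have heq : fB' Q s = -(1 * deriv Q s + id s * deriv (deriv Q) s) - 2 * deriv Q s := by
    unfold fB'; simp only [id]; ring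
  rw [heq]; unfold fB; exact h

lemma hCat : HasDerivAt (fC Q) (fC' Q s) s := by
  have h := ((hQ2at hQ hs).div (hasDerivAt_pow 2 s) (by positivity)).sub
    ((hQ1at hQ hs).div (hasDerivAt_pow 3 s) (by positivity))
  have heq : fC' Q s =
      (deriv (deriv (deriv Q)) s * s ^ 2 - deriv (deriv Q) s * ((2:ℕ) * s ^ (2-1))) / (s ^ 2) ^ 2
      - (deriv (deriv Q) s * s ^ 3 - deriv Q s * ((3:ℕ) * s ^ (3-1))) / (s ^ 3) ^ 2 := by
    unfold fC'; push_cast; field_simp; ring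
  rw [heq]; unfold fC; exact h

lemma hDat : HasDerivAt (fD Q) (fD' Q s) s := by
  have h := (((hQ1at hQ hs).const_mul (-3)).div (hasDerivAt_id s) hs.ne').sub (hQ2at hQ hs)
  have heq : fD' Q s =
      (-3 * deriv (deriv Q) s * id s - -3 * deriv Q s * 1) / id s ^ 2
      - deriv (deriv (deriv Q)) s := by
    unfold fD'; simp only [id]; field_simp; ring
  rw [heq]; unfold fD; exact h

end derivs

noncomputable def ftil (Q : ℝ → ℝ) (i j : Fin 3) (η : E) : ℝ :=
  fA Q ‖η‖ * (η i * η j) + fB Q ‖η‖ * (if i = j then 1 else 0)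

noncomputable def f1 (Q : ℝ → ℝ) (i j k : Fin 3) (η : E) : ℝ :=
  fC Q ‖η‖ * (η k * (η i * η j))
  + fA Q ‖η‖ * ((if k = i then 1 else 0) * η j + (if k = j then 1 else 0) * η i)
  + fD Q ‖η‖ * (η k * (if i = j then 1 else 0))

lemma pd_ftil {Q : ℝ → ℝ} (hQ : ContDiffOn ℝ (⊤ : ℕ∞) Q (Set.Ioi 0)) (i j k : Fin 3)
    {ξ : E} (hξ : ξ ≠ 0) : pd (ftil Q i j) k ξ = f1 Q i j k ξ := by
  have hr : (0:ℝ) < ‖ξ‖ := norm_pos_iff.2 hξ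
  have H1 := term_hasFDerivAt hξ (hAat hQ hr)
    ((proj_hasFDerivAt i ξ).mul (proj_hasFDerivAt j ξ))
  have H2 := term_hasFDerivAt hξ (hBat hQ hr)
    (hasFDerivAt_const (if i = j then (1:ℝ) else 0) ξ)
  have H := H1.add H2
  unfold pd
  rw [show ftil Q i j = (fun η : E =>
      fA Q ‖η‖ * (η i * η j) + fB Q ‖η‖ * (if i = j then 1 else 0)) from rfl]
  rw [HasFDerivAt.fderiv (f := fun η : E =>
      fA Q ‖η‖ * (η i * η j) + fB Q ‖η‖ * (if i = j then 1 else 0)) H]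
  simp only [ContinuousLinearMap.add_apply, ContinuousLinearMap.smul_apply, smul_eq_mul,
    innerSL_single, proj_single, ContinuousLinearMap.zero_apply, Pi.mul_apply]
  unfold f1 fA fA' fB fB' fC fD
  generalize (if k = i then (1:ℝ) else 0) = a
  generalize (if k = j then (1:ℝ) else 0) = b
  generalize (if i = j then (1:ℝ) else 0) = d
  field_simp
  ring

lemma pd_f1 {Q : ℝ → ℝ} (hQ : ContDiffOn ℝ (⊤ : ℕ∞) Q (Set.Ioi 0)) (i j k : Fin 3)
    {ξ : E} (hξ : ξ ≠ 0) :
    pd (f1 Q i j k) k ξ =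
      (fC' Q ‖ξ‖ * ‖ξ‖⁻¹ * (ξ i * ξ j) + fD' Q ‖ξ‖ * ‖ξ‖⁻¹ * (if i = j then 1 else 0))
        * (ξ k * ξ k)
      + (if k = i then (1:ℝ) else 0)
        * ((fC Q ‖ξ‖ * ξ j + fA' Q ‖ξ‖ * ‖ξ‖⁻¹ * ξ j) * ξ k)
      + (if k = j then (1:ℝ) else 0)
        * ((fC Q ‖ξ‖ * ξ i + fA' Q ‖ξ‖ * ‖ξ‖⁻¹ * ξ i) * ξ k)
      + (if k = i then (1:ℝ) else 0) * ((if k = j then (1:ℝ) else 0) * (2 * fA Q ‖ξ‖))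
      + (fC Q ‖ξ‖ * (ξ i * ξ j) + fD Q ‖ξ‖ * (if i = j then 1 else 0)) := by
  have hr : (0:ℝ) < ‖ξ‖ := norm_pos_iff.2 hξ
  have H1 := term_hasFDerivAt hξ (hCat hQ hr)
    ((proj_hasFDerivAt k ξ).mul ((proj_hasFDerivAt i ξ).mul (proj_hasFDerivAt j ξ)))
  have H2 := term_hasFDerivAt hξ (hAat hQ hr)
    (((proj_hasFDerivAt j ξ).const_mul (if k = i then (1:ℝ) else 0)).add
      ((proj_hasFDerivAt i ξ).const_mul (if k = j then (1:ℝ) else 0)))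
  have H3 := term_hasFDerivAt hξ (hDat hQ hr)
    ((proj_hasFDerivAt k ξ).mul_const (if i = j then (1:ℝ) else 0))
  have H := (H1.add H2).add H3
  unfold pd
  rw [show f1 Q i j k = (fun η : E =>
      (fC Q ‖η‖ * (η k * (η i * η j))
        + fA Q ‖η‖ * ((if k = i then 1 else 0) * η j + (if k = j then 1 else 0) * η i))
      + fD Q ‖η‖ * (η k * (if i = j then 1 else 0))) from rfl]
  rw [HasFDerivAt.fderiv (f := fun η : E =>
      (fC Q ‖η‖ * (η k * (η i * η j))
        + fA Q ‖η‖ * ((if k = i then 1 else 0) * η j + (if k = j then 1 else 0) * η i))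
      + fD Q ‖η‖ * (η k * (if i = j then 1 else 0))) H]
  simp only [ContinuousLinearMap.add_apply, ContinuousLinearMap.smul_apply, smul_eq_mul,
    innerSL_single, proj_single, ContinuousLinearMap.zero_apply, eq_self_iff_true, if_true,
    Pi.mul_apply, Pi.add_apply]
  generalize (if k = i then (1:ℝ) else 0) = a
  generalize (if k = j then (1:ℝ) else 0) = b
  generalize (if i = j then (1:ℝ) else 0) = d
  ring

lemma sum_sq_coords (ξ : E) : ∑ k, ξ k * ξ k = ‖ξ‖ ^ 2 := by
  rw [EuclideanSpace.norm_sq_eq]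
  congr 1; ext k; rw [Real.norm_eq_abs, sq_abs, sq]

set_option maxHeartbeats 1000000 in
/-- The Laplacian of the isotropic tensor with defining scalar `Q` is the isotropic tensor
with defining scalar `D(Q) = Q'' + (4/r) Q'`. -/
theorem stmt_6 (Q : ℝ → ℝ) (hQ : ContDiffOn ℝ (⊤ : ℕ∞) Q (Set.Ioi 0))
    (DQ : ℝ → ℝ) (hDQ : ∀ r, DQ r = deriv (deriv Q) r + (4 / r) * deriv Q r) :
    ∀ ξ : EuclideanSpace ℝ (Fin 3), ξ ≠ 0 → ∀ i j,
      lap (fun η => Qtens Q η i j) ξ = Qtens DQ ξ i j := by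
  intro ξ hξ i j
  have hr : (0:ℝ) < ‖ξ‖ := norm_pos_iff.2 hξ
  have hrne : ‖ξ‖ ≠ 0 := hr.ne'
  -- equality of Qtens and ftil away from 0
  have hfe : Set.EqOn (fun η : E => Qtens Q η i j) (ftil Q i j) {η : E | η ≠ 0} := by
    intro η hη
    have hn : ‖η‖ ≠ 0 := (norm_pos_iff.2 (by exact hη)).ne'
    simp only [Qtens, ftil, fA, fB]
    generalize (if i = j then (1:ℝ) else 0) = d
    field_simp
    ring
  have hfd : ∀ η : E, η ≠ 0 → ∀ k, pd (fun η => Qtens Q η i j) k η = pd (ftil Q i j) k η := by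
    intro η hη k
    unfold pd
    rw [Filter.EventuallyEq.fderiv_eq
      (Filter.eventuallyEq_of_mem (isOpen_ne.mem_nhds hη) hfe)]
  have hstep : ∀ k, pd (pd (fun η => Qtens Q η i j) k) k ξ = pd (f1 Q i j k) k ξ := by
    intro k
    have hEq : pd (fun η => Qtens Q η i j) k =ᶠ[nhds ξ] f1 Q i j k :=
      Filter.eventuallyEq_of_mem (isOpen_ne.mem_nhds hξ)
        (fun η hη => (hfd η hη k).trans (pd_ftil hQ i j k hη))
    show fderiv ℝ (pd (fun η => Qtens Q η i j) k) ξ (EuclideanSpace.single k 1)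
      = pd (f1 Q i j k) k ξ
    rw [hEq.fderiv_eq]
    rfl
  have hsum : lap (fun η => Qtens Q η i j) ξ = ∑ k, pd (f1 Q i j k) k ξ := by
    unfold lap
    exact Finset.sum_congr rfl fun k _ => hstep k
  rw [hsum, Finset.sum_congr rfl fun k _ => pd_f1 hQ i j k hξ]
  -- evaluate the sum over k
  simp only [Finset.sum_add_distrib, ← Finset.mul_sum, ite_mul, one_mul, zero_mul,
    Finset.sum_ite_eq', Finset.mem_univ, if_true, sum_sq_coords,
    Finset.sum_const, Finset.card_univ, Fintype.card_fin, nsmul_eq_mul]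
  -- derivative of DQ
  have hfun : DQ = fun s => deriv (deriv Q) s + 4 / s * deriv Q s := funext hDQ
  have h4 : HasDerivAt (fun s : ℝ => 4 / s) (-(4 / ‖ξ‖ ^ 2)) ‖ξ‖ := by
    have h := (hasDerivAt_inv hrne).const_mul (4:ℝ)
    simp only [div_eq_mul_inv]
    exact h.congr_deriv (by ring)
  have hDer : HasDerivAt DQ
      (deriv (deriv (deriv Q)) ‖ξ‖
        + (-(4 / ‖ξ‖ ^ 2) * deriv Q ‖ξ‖ + 4 / ‖ξ‖ * deriv (deriv Q) ‖ξ‖)) ‖ξ‖ := by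
    rw [hfun]
    exact (hQ2at hQ hr).add (h4.mul (hQ1at hQ hr))
  rw [Qtens, hDer.deriv, hDQ ‖ξ‖]
  unfold fA fA' fC fC' fD fD'
  by_cases hij : i = j
  · simp only [hij, eq_self_iff_true, if_true]
    field_simp
    ring
  · simp only [if_neg hij]
    field_simp
    ring
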